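/- Let p ∈ (0,1/2), T > 0 and t₀ ∈ ℝ, and let W : [t₀,∞) → [0,∞) be differentiable and satisfy W′(t) ≤ −(1/(pT)) exp(W(t)^p) W(t)^{1−p} for every t ≥ t₀ with W(t) > 0. Set T_s = T (1 − exp(−W(t₀)^p)). Then: (i) T_s ≤ T; (ii) W(t) ≤ [ln(1/((t−t₀)/T + exp(−W(t₀)^p)))]^{1/p} for all t ∈ [t₀, t₀ + T_s); and (iii) W(t) = 0 for all t ≥ t₀ + T_s. (This is the fixed-time comparison estimate at the core of the FxT-parking theorem: the closed loop with the homogeneity-scaled feedback has Lyapunov function satisfying the above differential inequality, hence converges to zero no later than the user-chosen time T.) -/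

import Mathlib

/-!
Along solutions, `E(t) = exp (-W(t) ^ p)` satisfies `E' = -p W^(p-1) W' E ≥ 1 / T` as long as
`W > 0`, so `E(t) ≥ E(t₀) + (t - t₀) / T`; solving for `W` gives the bound (ii). Since `E < 1`
while `W > 0`, `W` must vanish before `E(t₀) + (t - t₀) / T` reaches `1`, i.e. by `t₀ + T_s`, and
zero is absorbing because `W` is nonincreasing wherever it is positive.
-/

open Real Set

lemma pos_of_deriv_nonpos_of_pos {f f' : ℝ → ℝ} {a b : ℝ}
    (hf : ∀ x ∈ Icc a b, HasDerivAt f (f' x) x) (hf' : ∀ x ∈ Icc a b, 0 < f x → f' x ≤ 0)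
    (hb : 0 < f b) : ∀ x ∈ Icc a b, 0 < f x := by
  by_contra! hS
  set S := {x ∈ Icc a b | f x ≤ 0}
  have hcont : ContinuousOn f (Icc a b) := fun x hx => (hf x hx).continuousAt.continuousWithinAt
  have hbdd : BddAbove S := ⟨b, fun x hx => hx.1.2⟩
  obtain ⟨⟨haσ, hσb⟩, hfσ⟩ : sSup S ∈ S :=
    (hcont.preimage_isClosed_of_isClosed isClosed_Icc isClosed_Iic).csSup_mem hS hbdd
  -- after the last non-positive value `f` is positive, hence nonincreasing
  have hpos : ∀ x ∈ Ioc (sSup S) b, 0 < f x := fun x hx => by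
    by_contra! h
    exact hx.1.not_ge (le_csSup hbdd ⟨⟨haσ.trans hx.1.le, hx.2⟩, h⟩)
  have hanti : AntitoneOn f (Icc (sSup S) b) := by
    refine antitoneOn_of_hasDerivWithinAt_nonpos (f' := f') (convex_Icc _ _)
      (hcont.mono (Icc_subset_Icc_left haσ)) (fun x hx => ?_) (fun x hx => ?_) <;>
      rw [interior_Icc] at hx
    · exact (hf x ⟨haσ.trans hx.1.le, hx.2.le⟩).hasDerivWithinAt
    · exact hf' x ⟨haσ.trans hx.1.le, hx.2.le⟩ (hpos x ⟨hx.1, hx.2.le⟩)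
  linarith [hanti ⟨le_rfl, hσb⟩ ⟨hσb, le_rfl⟩ hσb]

lemma one_div_le_exp_neg_rpow_mul {p T w w' : ℝ} (hp : 0 < p) (hT : 0 < T) (hw : 0 < w)
    (h : w' ≤ -(1 / (p * T)) * exp (w ^ p) * w ^ (1 - p)) :
    1 / T ≤ exp (-(w ^ p)) * -(w' * p * w ^ (p - 1)) := by
  have hexp : exp (-(w ^ p)) * exp (w ^ p) = 1 := by rw [← exp_add]; simp
  have hrpow : w ^ (p - 1) * w ^ (1 - p) = 1 := by rw [← rpow_add hw]; simp
  calc 1 / T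
      = (exp (-(w ^ p)) * p * w ^ (p - 1)) * ((1 / (p * T)) * exp (w ^ p) * w ^ (1 - p)) := by
        field_simp
        linear_combination -hexp - exp (-(w ^ p)) * exp (w ^ p) * hrpow
    _ ≤ (exp (-(w ^ p)) * p * w ^ (p - 1)) * -w' :=
        mul_le_mul_of_nonneg_left (by linarith) (by positivity)
    _ = exp (-(w ^ p)) * -(w' * p * w ^ (p - 1)) := by ring

lemma add_exp_neg_rpow_le_exp_neg_rpow {p T a b : ℝ} {W W' : ℝ → ℝ} (hp : 0 < p) (hT : 0 < T)
    (hab : a ≤ b) (hW : ∀ t ∈ Icc a b, HasDerivAt W (W' t) t) (hpos : ∀ t ∈ Icc a b, 0 < W t)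
    (hineq : ∀ t ∈ Icc a b, W' t ≤ -(1 / (p * T)) * exp (W t ^ p) * W t ^ (1 - p)) :
    (b - a) / T + exp (-(W a ^ p)) ≤ exp (-(W b ^ p)) := by
  have hE : ∀ t ∈ Icc a b, HasDerivAt (fun u => exp (-(W u ^ p)))
      (exp (-(W t ^ p)) * -(W' t * p * W t ^ (p - 1))) t := fun t ht =>
    ((hW t ht).rpow_const (Or.inl (hpos t ht).ne')).neg.exp
  have hgrowth := (convex_Icc a b).mul_sub_le_image_sub_of_le_deriv (C := 1 / T)
    (fun t ht => (hE t ht).continuousAt.continuousWithinAt)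
    (fun t ht => (hE t (interior_subset ht)).differentiableAt.differentiableWithinAt)
    (fun t ht => by
      rw [(hE t (interior_subset ht)).deriv]
      exact one_div_le_exp_neg_rpow_mul hp hT (hpos t (interior_subset ht))
        (hineq t (interior_subset ht)))
    a (left_mem_Icc.2 hab) b (right_mem_Icc.2 hab) hab
  rw [one_div_mul_eq_div] at hgrowth
  linarith

lemma le_log_one_div_rpow_of_le_exp_neg_rpow {p w x : ℝ} (hp : 0 < p) (hw : 0 ≤ w) (hx : 0 < x)
    (h : x ≤ exp (-(w ^ p))) : w ≤ log (1 / x) ^ (1 / p) := by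
  have hwp : w ^ p ≤ log (1 / x) := by
    rw [one_div, log_inv, le_neg, ← log_exp (-(w ^ p))]
    exact log_le_log hx h
  calc w = (w ^ p) ^ (1 / p) := by rw [← rpow_mul hw, mul_one_div_cancel hp.ne', rpow_one]
    _ ≤ log (1 / x) ^ (1 / p) := rpow_le_rpow (rpow_nonneg hw p) hwp (by positivity)

theorem fixed_time_comparison
    (p T t₀ : ℝ) (hp₀ : 0 < p) (hT : 0 < T)
    (W W' : ℝ → ℝ)
    (hWnonneg : ∀ t : ℝ, t₀ ≤ t → 0 ≤ W t)
    (hWderiv : ∀ t : ℝ, t₀ ≤ t → HasDerivAt W (W' t) t)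
    (hWineq : ∀ t : ℝ, t₀ ≤ t → 0 < W t →
      W' t ≤ -(1 / (p * T)) * Real.exp (W t ^ p) * W t ^ (1 - p)) :
    T * (1 - Real.exp (-(W t₀ ^ p))) ≤ T
    ∧ (∀ t : ℝ, t₀ ≤ t → t < t₀ + T * (1 - Real.exp (-(W t₀ ^ p))) →
        W t ≤ (Real.log (1 / ((t - t₀) / T + Real.exp (-(W t₀ ^ p))))) ^ (1 / p))
    ∧ (∀ t : ℝ, t₀ + T * (1 - Real.exp (-(W t₀ ^ p))) ≤ t → W t = 0) := by
  have hE₀ : 0 < exp (-(W t₀ ^ p)) := exp_pos _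
  have hE₁ : exp (-(W t₀ ^ p)) ≤ 1 :=
    exp_le_one_iff.2 (neg_nonpos.2 (rpow_nonneg (hWnonneg t₀ le_rfl) p))
  have hcomp : ∀ t, t₀ ≤ t → 0 < W t → (t - t₀) / T + exp (-(W t₀ ^ p)) ≤ exp (-(W t ^ p)) := by
    intro t ht hWt
    have hpos := pos_of_deriv_nonpos_of_pos (a := t₀) (fun u hu => hWderiv u hu.1)
      (fun u hu hWu => (hWineq u hu.1 hWu).trans
        (by rw [neg_mul, neg_mul, neg_nonpos]; positivity)) hWt
    exact add_exp_neg_rpow_le_exp_neg_rpow hp₀ hT ht (fun u hu => hWderiv u hu.1) hpos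
      (fun u hu => hWineq u hu.1 (hpos u hu))
  refine ⟨by nlinarith, fun t ht hts => ?_, fun t hts => ?_⟩
  · have hx : (t - t₀) / T < 1 - exp (-(W t₀ ^ p)) := by rw [div_lt_iff₀ hT]; linarith
    refine le_log_one_div_rpow_of_le_exp_neg_rpow hp₀ (hWnonneg t ht)
      (add_pos_of_nonneg_of_pos (div_nonneg (sub_nonneg.2 ht) hT.le) hE₀) ?_
    rcases (hWnonneg t ht).eq_or_lt with hWt | hWt
    · rw [← hWt, zero_rpow hp₀.ne', neg_zero, exp_zero]; linarith
    · exact hcomp t ht hWt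
  · have ht : t₀ ≤ t := le_trans (by nlinarith) hts
    by_contra hWt
    have hWt := (hWnonneg t ht).lt_of_ne' hWt
    have hx : 1 - exp (-(W t₀ ^ p)) ≤ (t - t₀) / T := by rw [le_div_iff₀ hT]; linarith
    linarith [hcomp t ht hWt, exp_lt_one_iff.2 (neg_neg_of_pos (rpow_pos_of_pos hWt p))]
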